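/- Assume d1 < x_T < d2 and that x⁰_{x,s}(t) ∈ (d1,d2) for every x ∈ (d1,d2), every 0 ≤ s < T and every t ∈ [s,T]. Then u(x,s) → +∞ as s → T, uniformly for x in every compact subset of (d1,d2): for every compact E ⊂ (d1,d2) and every M > 0 there exists s0 ∈ [0,T) such that u(x,s) ≥ M for all x ∈ E and all s ∈ [s0,T). -/

import Mathlib

/-- The deterministic trajectory `x⁰_{x,s}`. -/
noncomputable def traj (a0 a1 T xT x s t : ℝ) : ℝ :=
  (x + a0 / a1) * Real.sinh (a1 * (T - t)) / Real.sinh (a1 * (T - s)) +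
    (xT + a0 / a1) * Real.sinh (a1 * (t - s)) / Real.sinh (a1 * (T - s)) - a0 / a1

/-- The two-point cost `u(x,s;d,t)`. -/
noncomputable def cost (a0 a1 T xT x s d t : ℝ) : ℝ :=
  a1 * Real.sinh (a1 * (T - s)) * (d - traj a0 a1 T xT x s t) ^ 2 /
    (2 * Real.sinh (a1 * (T - t)) * Real.sinh (a1 * (t - s)))

/-- The exit cost `u(x,s) = inf { u(x,s;d,t) : d ∈ {d1,d2}, t ∈ (s,T) }`. -/
noncomputable def uval (a0 a1 T xT d1 d2 x s : ℝ) : ℝ :=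
  sInf {r : ℝ | ∃ d, (d = d1 ∨ d = d2) ∧ ∃ t ∈ Set.Ioo s T, r = cost a0 a1 T xT x s d t}

lemma aux_sinh_exp {y : ℝ} (hy : 0 ≤ y) : Real.sinh y ≤ y * Real.exp (2*y) := by
  have hC : (1 - 2*y) * Real.exp (2*y) ≤ 1 := by
    have := Real.add_one_le_exp (-(2*y))
    have h2 := Real.exp_pos (2*y)
    have hm : Real.exp (-(2*y)) * Real.exp (2*y) = 1 := by
      rw [← Real.exp_add]; simp
    nlinarith
  have hD : Real.exp (-y) ≤ 1 := Real.exp_le_one_iff.2 (by linarith)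
  have hE : 1 ≤ Real.exp (2*y) := Real.one_le_exp_iff.2 (by linarith)
  have hB : Real.exp (2*y) = Real.exp y * Real.exp y := by
    rw [← Real.exp_add]; ring_nf
  have hm2 : Real.exp (-y) * Real.exp y = 1 := by rw [← Real.exp_add]; simp
  rw [Real.sinh_eq]
  have hp : 0 < Real.exp y := Real.exp_pos y
  have hp2 : 0 < Real.exp (-y) := Real.exp_pos (-y)
  nlinarith [mul_nonneg (sub_nonneg.2 hD) (sub_nonneg.2 hE)]

lemma aux_two_sinh (u v : ℝ) : 2 * Real.sinh u * Real.sinh v ≤ Real.cosh (u+v) - 1 := by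
  have h1 := Real.cosh_add u v
  have h2 := Real.cosh_sub u v
  have h3 := Real.one_le_cosh (u - v)
  linarith

lemma aux_half (w : ℝ) : Real.cosh w - 1 = 2 * Real.sinh (w/2)^2 ∧
    Real.sinh w = 2 * Real.sinh (w/2) * Real.cosh (w/2) := by
  have h1 : Real.cosh (2 * (w/2)) = Real.cosh (w/2)^2 + Real.sinh (w/2)^2 := Real.cosh_two_mul _
  have h2 : Real.sinh (2 * (w/2)) = 2 * Real.sinh (w/2) * Real.cosh (w/2) := Real.sinh_two_mul _
  have h3 : Real.cosh (w/2)^2 = Real.sinh (w/2)^2 + 1 := Real.cosh_sq _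
  rw [show 2*(w/2) = w by ring] at h1 h2
  exact ⟨by linarith, h2⟩

/-- `σ = A + B ≤ 1` and `1 - σ ≤ cosh(u+v) - 1`. -/
lemma sigma_bounds (u v : ℝ) (hu : 0 < u) (hv : 0 < v) :
    Real.sinh u / Real.sinh (u+v) + Real.sinh v / Real.sinh (u+v) ≤ 1 ∧
    1 - (Real.sinh u / Real.sinh (u+v) + Real.sinh v / Real.sinh (u+v))
      ≤ Real.cosh (u+v) - 1 := by
  have hsu : 0 < Real.sinh u := Real.sinh_pos_iff.2 hu
  have hsv : 0 < Real.sinh v := Real.sinh_pos_iff.2 hv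
  have hsw : 0 < Real.sinh (u+v) := Real.sinh_pos_iff.2 (by linarith)
  have hcw := Real.cosh_pos (u+v)
  have hcw1 := Real.one_le_cosh (u+v)
  constructor
  · rw [← add_div, div_le_one hsw, Real.sinh_add]
    have cu := Real.one_le_cosh u
    have cv := Real.one_le_cosh v
    nlinarith
  · have hadd : Real.sinh (u+v) ≤ (Real.sinh u + Real.sinh v) * Real.cosh (u+v) := by
      rw [Real.sinh_add]
      have c1 : Real.cosh v ≤ Real.cosh (u+v) := Real.cosh_le_cosh.2 (by
        rw [abs_of_nonneg hv.le, abs_of_nonneg (by linarith : (0:ℝ) ≤ u + v)]; linarith)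
      have c2 : Real.cosh u ≤ Real.cosh (u+v) := Real.cosh_le_cosh.2 (by
        rw [abs_of_nonneg hu.le, abs_of_nonneg (by linarith : (0:ℝ) ≤ u + v)]; linarith)
      nlinarith
    have hge : 1 / Real.cosh (u+v) ≤
        Real.sinh u / Real.sinh (u+v) + Real.sinh v / Real.sinh (u+v) := by
      rw [← add_div, div_le_div_iff₀ hcw hsw]
      nlinarith
    have h2 : 1 - 1 / Real.cosh (u+v) ≤ Real.cosh (u+v) - 1 := by
      have hinv : 2 - Real.cosh (u+v) ≤ 1 / Real.cosh (u+v) := by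
        rw [le_div_iff₀ hcw]; nlinarith
      linarith
    linarith

/-- small-`w` bound on `cosh w - 1`. -/
lemma cosh_small {w : ℝ} (hw : 0 < w) (hw1 : w ≤ 1) :
    Real.cosh w - 1 ≤ w^2 * Real.exp 1 ^ 2 / 2 := by
  have h := (aux_half w).1
  have hs2 : 0 < Real.sinh (w/2) := Real.sinh_pos_iff.2 (by linarith)
  have hle : Real.sinh (w/2) ≤ (w/2) * Real.exp 1 := by
    have h' := aux_sinh_exp (y := w/2) (by linarith)
    have hexp : Real.exp (2*(w/2)) ≤ Real.exp 1 := Real.exp_le_exp.2 (by linarith)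
    nlinarith [Real.exp_pos (2*(w/2))]
  rw [h]
  nlinarith [mul_le_mul hle hle hs2.le (by positivity)]

/-- Window bound for the convex-ish combination. -/
lemma traj_window (p q k C δ x xT A B : ℝ)
    (hA : 0 ≤ A) (hB : 0 ≤ B) (hσ : A + B ≤ 1)
    (hC1 : |p| + |k| ≤ C) (hC2 : |q| + |k| ≤ C)
    (hpert : (1 - (A+B)) * C ≤ δ/2)
    (hpx : p ≤ x) (hxq : x ≤ q) (hpxT : p ≤ xT) (hxTq : xT ≤ q) :
    p - δ/2 ≤ x*A + xT*B + k*(A+B-1) ∧ x*A + xT*B + k*(A+B-1) ≤ q + δ/2 := by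
  have h0σ : 0 ≤ 1 - (A+B) := by linarith
  constructor
  · nlinarith [mul_nonneg (sub_nonneg.2 hpx) hA, mul_nonneg (sub_nonneg.2 hpxT) hB,
      mul_le_mul_of_nonneg_left (le_abs_self p) h0σ,
      mul_le_mul_of_nonneg_left (le_abs_self k) h0σ,
      mul_le_mul_of_nonneg_left hC1 h0σ]
  · nlinarith [mul_nonneg (sub_nonneg.2 hxq) hA, mul_nonneg (sub_nonneg.2 hxTq) hB,
      mul_le_mul_of_nonneg_left (neg_abs_le q) h0σ,
      mul_le_mul_of_nonneg_left (neg_abs_le k) h0σ,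
      mul_le_mul_of_nonneg_left hC2 h0σ]

lemma window_sq (lo hi tr δ : ℝ) (hδ : 0 < δ) (h1 : lo + δ/2 ≤ tr) (h2 : tr ≤ hi - δ/2) :
    (δ/2)^2 ≤ (lo - tr)^2 ∧ (δ/2)^2 ≤ (hi - tr)^2 := by
  constructor <;> nlinarith

/-- Core quantitative lower bound. -/
lemma core_bound (M c ε δ sq u v : ℝ)
    (hM : 0 < M) (hc : 0 < c) (hε : 0 < ε) (hδ : 0 < δ)
    (hu : 0 < u) (hv : 0 < v) (huv : u + v = c * ε)
    (hw1 : c * ε ≤ 1)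
    (hεM : 2 * Real.exp 1 * M * ε ≤ δ^2)
    (hsq : (δ/2)^2 ≤ sq) :
    M ≤ c * Real.sinh (c*ε) * sq / (2 * Real.sinh u * Real.sinh v) := by
  have hwpos : 0 < c * ε := mul_pos hc hε
  have hsu : 0 < Real.sinh u := Real.sinh_pos_iff.2 hu
  have hsv : 0 < Real.sinh v := Real.sinh_pos_iff.2 hv
  have hsw : 0 < Real.sinh (c*ε) := Real.sinh_pos_iff.2 hwpos
  have hden : 0 < 2 * Real.sinh u * Real.sinh v := by positivity
  have hdenle : 2 * Real.sinh u * Real.sinh v ≤ Real.cosh (c*ε) - 1 := by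
    have := aux_two_sinh u v; rw [huv] at this; exact this
  have hcwm1 : 0 < Real.cosh (c*ε) - 1 := lt_of_lt_of_le hden hdenle
  have hsq0 : 0 ≤ sq := le_trans (by positivity) hsq
  have hstep : c * Real.sinh (c*ε) * (δ/2)^2 / (Real.cosh (c*ε) - 1) ≤
      c * Real.sinh (c*ε) * sq / (2 * Real.sinh u * Real.sinh v) := by
    apply div_le_div₀ (by positivity)
      (mul_le_mul_of_nonneg_left hsq (by positivity)) hden hdenle
  refine le_trans ?_ hstep
  rw [le_div_iff₀ hcwm1, (aux_half (c*ε)).1, (aux_half (c*ε)).2]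
  have hs2pos : 0 < Real.sinh (c*ε/2) := Real.sinh_pos_iff.2 (by linarith)
  have hc2ge1 : 1 ≤ Real.cosh (c*ε/2) := Real.one_le_cosh _
  have hs2le : Real.sinh (c*ε/2) ≤ (c*ε/2) * Real.exp 1 := by
    have h' := aux_sinh_exp (y := c*ε/2) (by linarith)
    have hexp : Real.exp (2*(c*ε/2)) ≤ Real.exp 1 := Real.exp_le_exp.2 (by linarith)
    nlinarith [Real.exp_pos (2*(c*ε/2))]
  have key : M * Real.sinh (c*ε/2) ≤ c * Real.cosh (c*ε/2) * (δ/2)^2 := by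
    have h1' : M * Real.sinh (c*ε/2) ≤ M * ((c*ε/2) * Real.exp 1) :=
      mul_le_mul_of_nonneg_left hs2le hM.le
    have h2' : M * ((c*ε/2) * Real.exp 1) = (2 * Real.exp 1 * M * ε) * c / 4 := by ring
    have h3' : (2 * Real.exp 1 * M * ε) * c / 4 ≤ δ^2 * c / 4 := by
      have := mul_le_mul_of_nonneg_right hεM hc.le; linarith
    have h4' : δ^2 * c / 4 ≤ c * Real.cosh (c*ε/2) * (δ/2)^2 := by
      have := mul_le_mul_of_nonneg_left hc2ge1 (show (0:ℝ) ≤ c*δ^2/4 by positivity)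
      nlinarith [this]
    linarith
  calc M * (2 * Real.sinh (c*ε/2)^2)
      = 2 * Real.sinh (c*ε/2) * (M * Real.sinh (c*ε/2)) := by ring
    _ ≤ 2 * Real.sinh (c*ε/2) * (c * Real.cosh (c*ε/2) * (δ/2)^2) :=
        mul_le_mul_of_nonneg_left key (by positivity)
    _ = c * (2 * Real.sinh (c*ε/2) * Real.cosh (c*ε/2)) * (δ/2)^2 := by ring

set_option maxHeartbeats 1000000 in
theorem stmt_10 (a0 a1 T xT d1 d2 : ℝ) (ha1 : a1 ≠ 0) (hT : 0 < T)
    (h1 : d1 < xT) (h2 : xT < d2)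
    (hint : ∀ x ∈ Set.Ioo d1 d2, ∀ s, 0 ≤ s → s < T →
      ∀ t ∈ Set.Icc s T, traj a0 a1 T xT x s t ∈ Set.Ioo d1 d2) :
    ∀ E : Set ℝ, IsCompact E → E ⊆ Set.Ioo d1 d2 → ∀ M : ℝ, 0 < M →
      ∃ s0, 0 ≤ s0 ∧ s0 < T ∧ ∀ x ∈ E, ∀ s, s0 ≤ s → s < T →
        M ≤ uval a0 a1 T xT d1 d2 x s := by
  intro E hE hEsub M hM
  rcases E.eq_empty_or_nonempty with hemp | hne
  · exact ⟨T/2, by linarith, by linarith, by simp [hemp]⟩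
  clear hint
  -- flip lemmas
  set c : ℝ := |a1| with hcdef
  have hc : 0 < c := abs_pos.2 ha1
  set k : ℝ := a0 / a1 with hkdef
  have hflip1 : ∀ X : ℝ, a1 * Real.sinh (a1 * X) = c * Real.sinh (c * X) := by
    intro X
    rcases abs_cases a1 with ⟨h, _⟩ | ⟨h, _⟩
    · rw [hcdef, h]
    · rw [hcdef, h, show -a1 * X = -(a1 * X) by ring, Real.sinh_neg]; ring
  have hflip2 : ∀ X Y : ℝ, Real.sinh (a1*X) * Real.sinh (a1*Y)
      = Real.sinh (c*X) * Real.sinh (c*Y) := by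
    intro X Y
    rcases abs_cases a1 with ⟨h, _⟩ | ⟨h, _⟩
    · rw [hcdef, h]
    · rw [hcdef, h, show -a1 * X = -(a1 * X) by ring, show -a1 * Y = -(a1 * Y) by ring,
        Real.sinh_neg, Real.sinh_neg]; ring
  have hflip3 : ∀ X Y : ℝ, Real.sinh (a1*X) / Real.sinh (a1*Y)
      = Real.sinh (c*X) / Real.sinh (c*Y) := by
    intro X Y
    rcases abs_cases a1 with ⟨h, _⟩ | ⟨h, _⟩
    · rw [hcdef, h]
    · rw [hcdef, h, show -a1 * X = -(a1 * X) by ring, show -a1 * Y = -(a1 * Y) by ring,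
        Real.sinh_neg, Real.sinh_neg, neg_div_neg_eq]
  -- compact set bounds
  have hm := hEsub (hE.sInf_mem hne)
  have hMx := hEsub (hE.sSup_mem hne)
  set p : ℝ := min (sInf E) xT with hpdef
  set q : ℝ := max (sSup E) xT with hqdef
  have hp : d1 < p := lt_min hm.1 h1
  have hq : q < d2 := max_lt hMx.2 h2
  have hpq : p ≤ q := le_trans (min_le_right _ _) (le_max_right _ _)
  set δ : ℝ := min (p - d1) (d2 - q) with hδdef
  have hδ : 0 < δ := lt_min (by linarith) (by linarith)
  have hδ1 : δ ≤ p - d1 := min_le_left _ _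
  have hδ2 : δ ≤ d2 - q := min_le_right _ _
  set C : ℝ := |p| + |q| + |k| + 1 with hCdef
  have hC : 1 ≤ C := by
    have h1' := abs_nonneg p; have h2' := abs_nonneg q; have h3' := abs_nonneg k
    rw [hCdef]; linarith
  have hC0 : 0 < C := by linarith
  have hC1 : |p| + |k| ≤ C := by
    have := abs_nonneg q; rw [hCdef]; linarith
  have hC2 : |q| + |k| ≤ C := by
    have := abs_nonneg p; rw [hCdef]; linarith
  set e1 : ℝ := Real.exp 1 with he1def
  have he1 : 1 ≤ e1 := by
    have := Real.add_one_le_exp (1:ℝ); rw [he1def]; linarith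
  have he1p : 0 < e1 := by linarith
  -- choice of ε0
  set ε0 : ℝ := min (min T 1) (min (1/c) (min (δ / (C * c^2 * e1^2)) (δ^2 / (2 * e1 * M))))
    with hε0def
  have hε0pos : 0 < ε0 := by
    apply lt_min (lt_min hT one_pos)
    apply lt_min (by positivity) (lt_min (by positivity) (by positivity))
  refine ⟨T - ε0, by
      have : ε0 ≤ T := le_trans (min_le_left _ _) (min_le_left _ _); linarith,
    by linarith, ?_⟩
  intro x hx s hs hsT
  have hpx : p ≤ x := le_trans (min_le_left _ _) (csInf_le hE.bddBelow hx)
  have hxq : x ≤ q := le_trans (le_csSup hE.bddAbove hx) (le_max_left _ _)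
  have hpxT : p ≤ xT := min_le_right _ _
  have hxTq : xT ≤ q := le_max_right _ _
  set ε : ℝ := T - s with hεdef
  have hε : 0 < ε := by rw [hεdef]; linarith
  have hεle : ε ≤ ε0 := by rw [hεdef]; linarith
  have hε1 : ε ≤ 1 := le_trans hεle (le_trans (min_le_left _ _) (min_le_right _ _))
  have hεc : c * ε ≤ 1 := by
    have h' : ε ≤ 1/c := le_trans hεle (le_trans (min_le_right _ _) (min_le_left _ _))
    rw [le_div_iff₀ hc] at h'; linarith
  have hεδ : C * c^2 * e1^2 * ε ≤ δ := by
    have h' : ε ≤ δ / (C * c^2 * e1^2) :=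
      le_trans hεle (le_trans (min_le_right _ _) (le_trans (min_le_right _ _) (min_le_left _ _)))
    rw [le_div_iff₀ (by positivity)] at h'; linarith
  have hεM : 2 * e1 * M * ε ≤ δ^2 := by
    have h' : ε ≤ δ^2 / (2 * e1 * M) :=
      le_trans hεle (le_trans (min_le_right _ _) (le_trans (min_le_right _ _) (min_le_right _ _)))
    rw [le_div_iff₀ (by positivity)] at h'; linarith
  -- the inf
  have hnonempty : {r : ℝ | ∃ d, (d = d1 ∨ d = d2) ∧
      ∃ t ∈ Set.Ioo s T, r = cost a0 a1 T xT x s d t}.Nonempty :=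
    ⟨cost a0 a1 T xT x s d1 ((s+T)/2), d1, Or.inl rfl, (s+T)/2,
      ⟨by linarith, by linarith⟩, rfl⟩
  apply le_csInf hnonempty
  rintro r ⟨d, hd, t, ⟨hst, htT⟩, rfl⟩
  -- core estimate
  set u : ℝ := c * (T - t) with hudef
  set v : ℝ := c * (t - s) with hvdef
  set w : ℝ := c * (T - s) with hwdef
  have hw_uv : w = u + v := by rw [hudef, hvdef, hwdef]; ring
  have hwε : w = c * ε := by rw [hwdef, hεdef]
  have hu : 0 < u := by rw [hudef]; exact mul_pos hc (by linarith)
  have hv : 0 < v := by rw [hvdef]; exact mul_pos hc (by linarith)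
  have hwpos : 0 < w := by rw [hw_uv]; linarith
  have hw1 : w ≤ 1 := by rw [hwε]; exact hεc
  have hsu : 0 < Real.sinh u := Real.sinh_pos_iff.2 hu
  have hsv : 0 < Real.sinh v := Real.sinh_pos_iff.2 hv
  have hsw : 0 < Real.sinh w := Real.sinh_pos_iff.2 hwpos
  -- rewrite cost
  have hcost : cost a0 a1 T xT x s d t =
      c * Real.sinh w * (d - traj a0 a1 T xT x s t)^2 / (2 * Real.sinh u * Real.sinh v) := by
    unfold cost
    rw [hwdef, hudef, hvdef, hflip1, mul_assoc 2, hflip2, ← mul_assoc]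
  -- traj decomposition
  set A : ℝ := Real.sinh u / Real.sinh w with hAdef
  set B : ℝ := Real.sinh v / Real.sinh w with hBdef
  have htraj : traj a0 a1 T xT x s t = x * A + xT * B + k * (A + B - 1) := by
    unfold traj
    rw [mul_div_assoc, mul_div_assoc, hflip3, hflip3, ← hkdef, ← hudef, ← hvdef, ← hwdef,
      ← hAdef, ← hBdef]
    ring
  have hA0 : 0 < A := div_pos hsu hsw
  have hB0 : 0 < B := div_pos hsv hsw
  have hσ := sigma_bounds u v hu hv
  rw [← hw_uv, ← hAdef, ← hBdef] at hσ
  -- cosh w - 1 small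
  have hε2 : ε^2 ≤ ε := by
    have := mul_le_mul_of_nonneg_right hε1 hε.le
    calc ε^2 = ε * ε := sq ε
      _ ≤ 1 * ε := this
      _ = ε := one_mul ε
  have hstep1 : Real.cosh w - 1 ≤ (c^2 * e1^2/2) * ε := by
    have h' := cosh_small hwpos hw1
    rw [← he1def] at h'
    have hw2 : w^2 = c^2 * ε^2 := by rw [hwε]; ring
    have h2' := mul_le_mul_of_nonneg_left hε2 (show (0:ℝ) ≤ c^2*e1^2/2 by positivity)
    calc Real.cosh w - 1 ≤ w^2 * e1^2/2 := h'
      _ = c^2*e1^2/2 * ε^2 := by rw [hw2]; ring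
      _ ≤ c^2*e1^2/2 * ε := h2'
  have hcwsmall : Real.cosh w - 1 ≤ δ/(2*C) := by
    rw [le_div_iff₀ (by positivity)]
    calc (Real.cosh w - 1) * (2*C) ≤ (c^2*e1^2/2*ε) * (2*C) :=
        mul_le_mul_of_nonneg_right hstep1 (by positivity)
      _ = C * c^2 * e1^2 * ε := by ring
      _ ≤ δ := hεδ
  have hpert : (1 - (A+B)) * C ≤ δ/2 := by
    calc (1 - (A+B)) * C ≤ (δ/(2*C)) * C :=
        mul_le_mul_of_nonneg_right (le_trans hσ.2 hcwsmall) hC0.le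
      _ = δ/2 := by field_simp
  -- traj window
  have hwin := traj_window p q k C δ x xT A B hA0.le hB0.le hσ.1 hC1 hC2 hpert
    hpx hxq hpxT hxTq
  have htr_lb : d1 + δ/2 ≤ traj a0 a1 T xT x s t := by
    rw [htraj]; have := hwin.1; linarith
  have htr_ub : traj a0 a1 T xT x s t ≤ d2 - δ/2 := by
    rw [htraj]; have := hwin.2; linarith
  have hsqw := window_sq d1 d2 (traj a0 a1 T xT x s t) δ hδ htr_lb htr_ub
  have hsq : (δ/2)^2 ≤ (d - traj a0 a1 T xT x s t)^2 := by
    rcases hd with rfl | rfl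
    · exact hsqw.1
    · exact hsqw.2
  rw [hcost, hwε]
  exact core_bound M c ε δ _ u v hM hc hε hδ hu hv (by rw [← hw_uv, hwε]) hεc
    (by rw [← he1def]; exact hεM) hsq
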